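/- Let R be a commutative ring equipped with a star operation (StarRing R), F an m×p matrix, H a p×m matrix, Φv an m×m matrix and Φr a p×p matrix over R. Suppose I − F·H is invertible with inverse P and I − H·F is invertible with inverse Q, set Φ₁₁ = P·(Φv + F·Φr·Fᴴ)·Pᴴ and Φ₂₁ = Q·(H·Φv + Φr·Fᴴ)·Pᴴ, suppose Φ₁₁ is invertible, and suppose H = Φ₂₁·Φ₁₁⁻¹. Then Φr·Fᴴ = 0. -/

import Mathlib

/-!
Right-multiplying `H = Φ₂₁ Φ₁₁⁻¹` by `Φ₁₁` gives `H Φ₁₁ = Φ₂₁`. By the push-through identity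
`H P = Q H`, the left side is `Q H (Φv + F Φr Fᴴ) Pᴴ`, so the difference of the two sides is
`Q (1 - H F) Φr Fᴴ Pᴴ = Φr Fᴴ Pᴴ`. Hence `Φr Fᴴ Pᴴ = 0`, and `Pᴴ` has the right inverse
`(1 - F H)ᴴ`, so `Φr Fᴴ = 0`.
-/

open Matrix

namespace Matrix

variable {R : Type*} [Ring R] {k m n : Type*} [Fintype m] [Fintype n] [DecidableEq n]

theorem push_through [DecidableEq m] {F : Matrix m n R} {H : Matrix n m R} {P : Matrix m m R}
    {Q : Matrix n n R} (hP : (1 - F * H) * P = 1) (hQ : Q * (1 - H * F) = 1) :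
    H * P = Q * H := by
  have hcomm : (1 - H * F) * H = H * (1 - F * H) := by
    rw [Matrix.sub_mul, Matrix.mul_sub, Matrix.one_mul, Matrix.mul_one, Matrix.mul_assoc]
  calc H * P = Q * (1 - H * F) * H * P := by rw [hQ, Matrix.one_mul]
    _ = Q * ((1 - H * F) * H) * P := by rw [Matrix.mul_assoc Q]
    _ = Q * H * ((1 - F * H) * P) := by rw [hcomm]; simp only [Matrix.mul_assoc]
    _ = Q * H := by rw [hP, Matrix.mul_one]

theorem mul_add_sub_mul_mul_add_eq {F : Matrix m n R} {H : Matrix n m R} {Q : Matrix n n R}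
    (hQ : Q * (1 - H * F) = 1) (V : Matrix m k R) (W : Matrix n k R) :
    Q * (H * V + W) - Q * H * (V + F * W) = W := by
  calc Q * (H * V + W) - Q * H * (V + F * W) = Q * (1 - H * F) * W := by
        simp only [Matrix.mul_add, Matrix.mul_sub, Matrix.sub_mul, Matrix.one_mul, Matrix.mul_assoc]
        abel
    _ = W := by rw [hQ, Matrix.one_mul]

end Matrix

theorem phir_mul_Fstar_eq_zero_general {R : Type*} [CommRing R] [StarRing R] {m p : ℕ}
    (F : Matrix (Fin m) (Fin p) R) (H : Matrix (Fin p) (Fin m) R)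
    (Φv : Matrix (Fin m) (Fin m) R) (Φr : Matrix (Fin p) (Fin p) R)
    (P : Matrix (Fin m) (Fin m) R) (Q : Matrix (Fin p) (Fin p) R)
    (hP₁ : (1 - F * H) * P = 1)
    (hQ₂ : Q * (1 - H * F) = 1)
    (Φ₁₁ : Matrix (Fin m) (Fin m) R) (Φ₂₁ : Matrix (Fin p) (Fin m) R)
    (hΦ₁₁ : Φ₁₁ = P * (Φv + F * Φr * Fᴴ) * Pᴴ)
    (hΦ₂₁ : Φ₂₁ = Q * (H * Φv + Φr * Fᴴ) * Pᴴ)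
    (hunit : IsUnit Φ₁₁)
    (hH : H = Φ₂₁ * Φ₁₁⁻¹) :
    Φr * Fᴴ = 0 := by
  have hHΦ₁₁ : H * Φ₁₁ = Φ₂₁ := by
    rw [hH, nonsing_inv_mul_cancel_right _ _ ((isUnit_iff_isUnit_det _).mp hunit)]
  have hPH : Pᴴ * (1 - F * H)ᴴ = 1 := by
    rw [← conjTranspose_mul, hP₁, conjTranspose_one]
  have hPH_zero : Φr * Fᴴ * Pᴴ = 0 := by
    calc Φr * Fᴴ * Pᴴ
        = (Q * (H * Φv + Φr * Fᴴ) - Q * H * (Φv + F * (Φr * Fᴴ))) * Pᴴ := by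
          rw [mul_add_sub_mul_mul_add_eq hQ₂]
      _ = Φ₂₁ - H * Φ₁₁ := by
          rw [hΦ₂₁, hΦ₁₁, ← push_through hP₁ hQ₂, Matrix.sub_mul]
          simp only [Matrix.mul_assoc]
      _ = 0 := by rw [hHΦ₁₁, sub_self]
  calc Φr * Fᴴ = Φr * Fᴴ * Pᴴ * (1 - F * H)ᴴ := by rw [Matrix.mul_assoc, hPH, Matrix.mul_one]
    _ = 0 := by rw [hPH_zero, Matrix.zero_mul]

theorem phir_mul_Fstar_eq_zero {R : Type*} [CommRing R] [StarRing R] {m p : ℕ}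
    (F : Matrix (Fin m) (Fin p) R) (H : Matrix (Fin p) (Fin m) R)
    (Φv : Matrix (Fin m) (Fin m) R) (Φr : Matrix (Fin p) (Fin p) R)
    (P : Matrix (Fin m) (Fin m) R) (Q : Matrix (Fin p) (Fin p) R)
    (hP₁ : (1 - F * H) * P = 1) (hP₂ : P * (1 - F * H) = 1)
    (hQ₁ : (1 - H * F) * Q = 1) (hQ₂ : Q * (1 - H * F) = 1)
    (Φ₁₁ : Matrix (Fin m) (Fin m) R) (Φ₂₁ : Matrix (Fin p) (Fin m) R)
    (hΦ₁₁ : Φ₁₁ = P * (Φv + F * Φr * Fᴴ) * Pᴴ)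
    (hΦ₂₁ : Φ₂₁ = Q * (H * Φv + Φr * Fᴴ) * Pᴴ)
    (hunit : IsUnit Φ₁₁)
    (hH : H = Φ₂₁ * Φ₁₁⁻¹) :
    Φr * Fᴴ = 0 :=
  phir_mul_Fstar_eq_zero_general F H Φv Φr P Q hP₁ hQ₂ Φ₁₁ Φ₂₁ hΦ₁₁ hΦ₂₁ hunit hH
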